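/- arXiv:1207.5748 — 2 statements merged into one kernel-verified Lean document; each statement's English description precedes it below -/
import Mathlib

section
/- Let k, d be positive integers, λ a partition of dk with conjugate λ*, and N ≥ λ_1, W = ℂ^N. The family of vectors {w_T : T ∈ 𝒯} in (⋀^k W)^{⊗d} is linearly independent. -/
/-!
For a tableau `T₀` let `φ_{T₀}` (`dualFun`) be the functional which, on the `b`-th tensor factor,
takes the `k × k` minor on the rows `S_b(T₀)` of the boxes of `T₀` holding `b`. For a tableau `T`,
`φ_{T₀}(t_γ)` is a product of determinants of `0/1` matrices, so it vanishes unless, for every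
`b`, the permutations `γ_s` carry the rows of the `b`-boxes of `T` bijectively onto `S_b(T₀)`.
If the `γ_s` already preserve the entries `< b` of `T`, they can only move the `b`-boxes of a
column down, so `∑ S_b(T) ≤ ∑ S_b(T₀)`, with equality only if they preserve the entries `b` too.
Hence the vector `(∑ S_b(T))_b` is lexicographically smaller than `(∑ S_b(T₀))_b`, unless
`T = T₀` and every `γ_s` preserves the entries of `T₀`. On `w_{T₀}` all those `γ` contribute the
same term `1`, because a transposition inside a block changes the sign of `γ` and the sign of
`t_γ` alike. So the matrix `(φ_{T₀}(w_T))` is triangular with nonzero diagonal.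
-/

open scoped TensorProduct

set_option synthInstance.maxHeartbeats 1000000
set_option maxHeartbeats 1000000

noncomputable section

/-- The endomorphism of the `k`-th exterior power `⋀[ℂ]^k W` (a submodule of the exterior
algebra) induced by a linear endomorphism `f` of `W`. -/
def exteriorPowerMap {W : Type*} [AddCommGroup W] [Module ℂ W] (k : ℕ)
    (f : W →ₗ[ℂ] W) : ⋀[ℂ]^k W →ₗ[ℂ] ⋀[ℂ]^k W :=
  LinearMap.restrict (ExteriorAlgebra.map f).toLinearMap
    (fun x hx => by
      have h : Submodule.map (ExteriorAlgebra.map f).toLinearMap (⋀[ℂ]^k W) ≤ ⋀[ℂ]^k W := by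
        rw [ExteriorAlgebra.exteriorPower, Submodule.map_pow, ExteriorAlgebra.ι_range_map_map]
        exact pow_le_pow_left' LinearMap.map_le_range k
      exact h ⟨x, hx, rfl⟩)

/-- `h_s^b`: the number of entries equal to `b` in column `s` of the filling `T` of the
diagram of `λ*` (whose column `s` has `lam s` boxes, rows being 0-indexed by
`0,…,lam s - 1`; columns `s` are 0-indexed as well, while the values of `T` lie in
`{1,…,d}`). -/
def hcount (lam : ℕ → ℕ) (T : ℕ → ℕ → ℕ) (s b : ℕ) : ℕ :=
  ((Finset.range (lam s)).filter fun i => T s i = b).card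

/-- The set `𝒯`: fillings `T` of the diagram of `λ*` (column `s` having `lam s` boxes) with
entries in `{1,…,d}`, vanishing outside the diagram (a normalization), weakly increasing down
each column, strictly increasing along each row, and in which every value `b ∈ {1,…,d}`
occurs exactly `k` times. -/
def IsTab (k d l : ℕ) (lam : ℕ → ℕ) (T : ℕ → ℕ → ℕ) : Prop :=
  (∀ s i, i < lam s → 1 ≤ T s i ∧ T s i ≤ d) ∧
  (∀ s i, lam s ≤ i → T s i = 0) ∧
  (∀ s i i', i ≤ i' → i' < lam s → T s i ≤ T s i') ∧
  (∀ s s' i, s < s' → i < lam s' → T s i < T s' i) ∧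
  (∀ b, 1 ≤ b → b ≤ d → ∑ s ∈ Finset.range l, hcount lam T s b = k)

/-- The (0-indexed) standard basis vector `e_{m+1}` of `ℂ^N`; junk value `0` if `m ≥ N`. -/
def E (N m : ℕ) : Fin N → ℂ := fun i => if (i : ℕ) = m then 1 else 0

/-- `f_s^b = h_s^1 + ⋯ + h_s^b` (so `f_s^0 = 0`). -/
def fcount (lam : ℕ → ℕ) (T : ℕ → ℕ → ℕ) (s b : ℕ) : ℕ :=
  ∑ b' ∈ Finset.Icc 1 b, hcount lam T s b'

/-- `γ_s(j)`, 0-indexed: the collection `γ` of permutations `γ_s ∈ S_{λ_s}` applied at column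
`s` and position `j`; junk value `0` when `s ≥ l` or `j ≥ λ_s`. -/
def gIdx (l : ℕ) (lam : ℕ → ℕ) (γ : ∀ s : Fin l, Equiv.Perm (Fin (lam s)))
    (s j : ℕ) : ℕ :=
  if hs : s < l then
    (if hj : j < lam s then ((γ ⟨s, hs⟩) ⟨j, hj⟩ : ℕ) else 0)
  else 0

/-- The list of the `k` vectors appearing in the `b`-th wedge factor (`b ∈ {1,…,d}`) of the
simple tensor `t_{γ_1,…,γ_l}`: for `s = 0,…,l-1` (in this order) the vectors
`e_{γ_s(f_s^{b-1}+1)},…,e_{γ_s(f_s^b)}` (everything written 0-indexed). -/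
def factorList (N l : ℕ) (lam : ℕ → ℕ) (T : ℕ → ℕ → ℕ)
    (γ : ∀ s : Fin l, Equiv.Perm (Fin (lam s))) (b : ℕ) : List (Fin N → ℂ) :=
  (List.range l).flatMap fun s =>
    (List.range' (fcount lam T s (b - 1)) (hcount lam T s b)).map fun j =>
      E N (gIdx l lam γ s j)

/-- The `b`-th wedge factor of the simple tensor `t_{γ_1,…,γ_l}`, as an element of
`⋀^k(ℂ^N)`. -/
def tFactor (k N l : ℕ) (lam : ℕ → ℕ) (T : ℕ → ℕ → ℕ)
    (γ : ∀ s : Fin l, Equiv.Perm (Fin (lam s))) (b : ℕ) : ⋀[ℂ]^k (Fin N → ℂ) :=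
  ⟨ExteriorAlgebra.ιMulti ℂ k fun i : Fin k => (factorList N l lam T γ b).getD i 0,
   ExteriorAlgebra.ιMulti_range ℂ k (Set.mem_range_self _)⟩

/-- The simple tensor `t_{γ_1,…,γ_l} ∈ (⋀^k ℂ^N)^{⊗d}` associated to the filling `T` and the
permutations `γ_s ∈ S_{λ_s}`. -/
def tTensor (k d N l : ℕ) (lam : ℕ → ℕ) (T : ℕ → ℕ → ℕ)
    (γ : ∀ s : Fin l, Equiv.Perm (Fin (lam s))) :
    ⨂[ℂ]^d (⋀[ℂ]^k (Fin N → ℂ)) :=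
  PiTensorProduct.tprod ℂ fun g : Fin d => tFactor k N l lam T γ ((g : ℕ) + 1)

/-- The vector `w_T = (1/∏_{s,b} h_s^b!) ∑_γ (∏_s sgn γ_s) · t_{γ_1,…,γ_l}`. -/
def wT (k d N l : ℕ) (lam : ℕ → ℕ) (T : ℕ → ℕ → ℕ) :
    ⨂[ℂ]^d (⋀[ℂ]^k (Fin N → ℂ)) :=
  (((∏ s ∈ Finset.range l, ∏ b ∈ Finset.Icc 1 d,
      Nat.factorial (hcount lam T s b) : ℕ) : ℂ))⁻¹ •
    ∑ γ : ∀ s : Fin l, Equiv.Perm (Fin (lam s)),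
      ((∏ s : Fin l, (Equiv.Perm.sign (γ s) : ℤ) : ℤ) : ℂ) • tTensor k d N l lam T γ

open Finset Function

theorem linearIndependent_of_triangular {ι R M α : Type*} [CommRing R] [NoZeroDivisors R]
    [AddCommGroup M] [Module R M] [LinearOrder α] (v : ι → M) (key : ι → α)
    (f : ι → M →ₗ[R] R) (hdiag : ∀ i, f i (v i) ≠ 0)
    (hlt : ∀ i j, j ≠ i → f i (v j) ≠ 0 → key j < key i) : LinearIndependent R v := by
  classical
  refine linearIndependent_iff'.mpr fun s g hrel i₀ hi₀ => by_contra fun hg₀ => ?_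
  obtain ⟨i, hi, hmin⟩ :=
    (s.filter (g · ≠ 0)).exists_min_image key ⟨i₀, mem_filter.mpr ⟨hi₀, hg₀⟩⟩
  rw [mem_filter] at hi
  have hsingle : f i (∑ j ∈ s, g j • v j) = g i * f i (v i) := by
    rw [map_sum, sum_eq_single_of_mem i hi.1]
    · simp
    intro j hj hji
    by_cases hgj : g j = 0
    · simp [hgj]
    by_contra hne
    have hfj : f i (v j) ≠ 0 := by simpa using right_ne_zero_of_mul (by simpa using hne)
    exact (hlt i j hji hfj).not_ge (hmin j (mem_filter.mpr ⟨hj, hgj⟩))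
  rw [hrel, map_zero] at hsingle
  exact mul_ne_zero hi.2 (hdiag i) hsingle.symm

theorem Finset.sum_Ico_le_sum_and_eq {X : Finset ℕ} {a : ℕ} (ha : ∀ x ∈ X, a ≤ x) :
    ∑ i ∈ Ico a (a + #X), i ≤ ∑ x ∈ X, x ∧
      (∑ x ∈ X, x ≤ ∑ i ∈ Ico a (a + #X), i → X = Ico a (a + #X)) := by
  induction X using Finset.induction_on_max with
  | empty => simp
  | insert m X hlt ih =>
    have hm : m ∉ X := fun h => (hlt m h).false
    obtain ⟨ih₁, ih₂⟩ := ih fun x hx => ha x (mem_insert_of_mem hx)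
    have hcard : #X ≤ m - a := by
      simpa using card_le_card fun x hx => mem_Ico.mpr ⟨ha x (mem_insert_of_mem hx), hlt x hx⟩
    have ham := ha m (mem_insert_self m X)
    rw [card_insert_of_notMem hm, ← add_assoc, sum_Ico_succ_top (by omega), sum_insert hm]
    refine ⟨by omega, fun hle => ?_⟩
    have hX := ih₂ (by omega)
    rw [show m = a + #X by omega, Nat.Ico_succ_right_eq_insert_Ico (by omega)]
    exact congrArg (insert _) hX

theorem Finset.filter_range_eq_range_card {n : ℕ} {p : ℕ → Prop} [DecidablePred p]
    (hp : ∀ i j, i ≤ j → j < n → p j → p i) :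
    (range n).filter p = range #((range n).filter p) := by
  induction n with
  | zero => simp
  | succ n ih =>
    by_cases hn : p n
    · rw [filter_true_of_mem fun i hi =>
        hp i n (by simpa [Nat.lt_succ_iff] using hi) (by omega) hn, card_range]
    · rw [range_add_one, filter_insert, if_neg hn]
      exact ih fun i j hij hj => hp i j hij (by omega)

namespace Equiv.Perm

theorem card_support_mul_swap_lt {α : Type*} [DecidableEq α] [Fintype α] {f : Perm α} {x : α}
    (hx : f x ≠ x) : #(f * swap x (f⁻¹ x)).support < #f.support := by
  have h := card_support_swap_mul (f := f⁻¹) (x := x) fun h => hx (inv_eq_iff_eq.mp h).symm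
  rwa [← support_inv, support_inv f, mul_inv_rev, swap_inv, inv_inv] at h

variable {ι : Type*} {α : ι → Type*} [Fintype ι] [DecidableEq ι] [∀ i, Fintype (α i)]
  [∀ i, DecidableEq (α i)]

theorem prod_sign_update_mul_swap (γ : ∀ i, Perm (α i)) (i : ι) {x y : α i} (hxy : x ≠ y) :
    ∏ j, (sign (update γ i (γ i * swap x y) j) : ℤ) = -∏ j, (sign (γ j) : ℤ) := by
  rw [← mul_prod_erase univ _ (mem_univ i), ← mul_prod_erase univ (fun j => (sign (γ j) : ℤ))
    (mem_univ i), update_self, sign_mul, sign_swap hxy]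
  have hrest : ∏ j ∈ univ.erase i, (sign (update γ i (γ i * swap x y) j) : ℤ)
      = ∏ j ∈ univ.erase i, (sign (γ j) : ℤ) :=
    prod_congr rfl fun j hj => by rw [update_of_ne (ne_of_mem_erase hj)]
  rw [hrest]
  push_cast
  ring

-- Induction on the total size of the supports: `γ i * swap x ((γ i)⁻¹ x)` fixes one more point
-- than `γ i`.
theorem sign_prod_mul_eq_of_swap {R β : Type*} [CommRing R] (lab : ∀ i, α i → β)
    (G : (∀ i, Perm (α i)) → R)
    (hswap : ∀ γ i (x y : α i), x ≠ y → lab i x = lab i y →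
      G (update γ i (γ i * swap x y)) = -G γ)
    (γ : ∀ i, Perm (α i)) (hγ : ∀ i x, lab i (γ i x) = lab i x) :
    ((∏ i, (sign (γ i) : ℤ) : ℤ) : R) * G γ = G 1 := by
  induction hn : ∑ i, #(γ i).support using Nat.strong_induction_on generalizing γ with
  | _ n ih =>
  by_cases htriv : γ = 1
  · subst htriv; simp
  obtain ⟨i, hi⟩ := Function.ne_iff.mp htriv
  obtain ⟨x, hx⟩ : ∃ x, γ i x ≠ x := not_forall.mp fun h => hi (Equiv.ext h)
  set y := (γ i)⁻¹ x
  have hγy : γ i y = x := (γ i).apply_symm_apply x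
  have hxy : x ≠ y := fun h => hx (by rw [h, hγy, ← h])
  have hlab : lab i x = lab i y := by rw [← hγ i y, hγy]
  set γ' := update γ i (γ i * swap x y)
  have hn' : ∑ j, #(γ' j).support < n := by
    have hsupp : #(γ' i).support < #(γ i).support := by
      rw [show γ' i = γ i * swap x y from update_self i _ γ]
      exact card_support_mul_swap_lt hx
    rw [← hn]
    refine sum_lt_sum (fun j _ => ?_) ⟨i, mem_univ i, hsupp⟩
    rcases eq_or_ne j i with rfl | hj
    · exact hsupp.le
    · simp [γ', update_of_ne hj]
  have hγ' : ∀ j z, lab j (γ' j z) = lab j z := by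
    intro j z
    rcases eq_or_ne j i with rfl | hj
    · simp only [γ', update_self, mul_apply, hγ]
      rcases eq_or_ne z x with rfl | hzx
      · rw [swap_apply_left, hlab]
      rcases eq_or_ne z y with rfl | hzy
      · rw [swap_apply_right, hlab]
      · rw [swap_apply_of_ne_of_ne hzx hzy]
    · simp [γ', update_of_ne hj, hγ]
  rw [← ih _ hn' γ' hγ' rfl, hswap γ i x y hxy hlab, prod_sign_update_mul_swap γ i hxy]
  push_cast
  ring

end Equiv.Perm

namespace List

variable {α β : Type*} {L : List α} {k : ℕ}

theorem image_getD_eq [DecidableEq α] [DecidableEq β] (hk : L.length = k) (f : α → β)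
    (z : α) :
    univ.image (fun i : Fin k => f (L.getD i z)) = L.toFinset.image f := by
  subst hk
  ext v
  simp only [mem_image, mem_univ, true_and, mem_toFinset, mem_iff_getElem]
  constructor
  · rintro ⟨i, rfl⟩
    exact ⟨_, ⟨i, i.isLt, rfl⟩, by rw [getD_eq_getElem]⟩
  · rintro ⟨_, ⟨i, hi, rfl⟩, rfl⟩
    exact ⟨⟨i, hi⟩, by rw [getD_eq_getElem]⟩

theorem injOn_of_injective_getD (hk : L.length = k) {f : α → β} {z : α}
    (h : Injective fun i : Fin k => f (L.getD i z)) : Set.InjOn f {x | x ∈ L} := by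
  subst hk
  rintro _ hp _ hq hpq
  obtain ⟨i, hi, rfl⟩ := mem_iff_getElem.mp hp
  obtain ⟨j, hj, rfl⟩ := mem_iff_getElem.mp hq
  have := @h ⟨i, hi⟩ ⟨j, hj⟩ (by
    change f (L.getD i z) = f (L.getD j z)
    rwa [getD_eq_getElem _ _ hi, getD_eq_getElem _ _ hj])
  simp only [Fin.mk.injEq] at this
  subst this
  rfl

theorem Nodup.injective_getD (hL : L.Nodup) (hk : L.length = k) {f : α → β} {z : α}
    (h : Set.InjOn f {x | x ∈ L}) : Injective fun i : Fin k => f (L.getD i z) := by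
  subst hk
  intro i j hij
  simp only [getD_eq_getElem _ _ i.isLt, getD_eq_getElem _ _ j.isLt] at hij
  exact Fin.ext ((hL.getElem_inj_iff).mp (h (getElem_mem _) (getElem_mem _) hij))

theorem Nodup.exists_swap_getD [DecidableEq α] (hL : L.Nodup) (hk : L.length = k) {p q : α}
    (hp : p ∈ L) (hq : q ∈ L) (hpq : p ≠ q) (z : α) :
    ∃ i j : Fin k, i ≠ j ∧
      ∀ n : Fin k, Equiv.swap p q (L.getD n z) = L.getD (Equiv.swap i j n) z := by
  subst hk
  obtain ⟨i, hi, rfl⟩ := mem_iff_getElem.mp hp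
  obtain ⟨j, hj, rfl⟩ := mem_iff_getElem.mp hq
  refine ⟨⟨i, hi⟩, ⟨j, hj⟩, fun h => hpq (by simp_all), fun n => ?_⟩
  simp only [getD_eq_getElem _ _ n.isLt, getD_eq_getElem _ _ (Equiv.swap _ _ n).isLt]
  rcases eq_or_ne n ⟨i, hi⟩ with rfl | hni
  · simp
  rcases eq_or_ne n ⟨j, hj⟩ with rfl | hnj
  · simp
  have hne : ∀ m (hm : m < L.length), n ≠ ⟨m, hm⟩ → L[(n : ℕ)] ≠ L[m] := fun m hm h he =>
    h (Fin.ext ((hL.getElem_inj_iff).mp he))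
  rw [Equiv.swap_apply_of_ne_of_ne hni hnj,
    Equiv.swap_apply_of_ne_of_ne (hne i hi hni) (hne j hj hnj)]

end List

section SelectionMatrix

variable {n α R : Type*} [DecidableEq n] [DecidableEq α] [CommRing R]

def selectionMatrix (R : Type*) [Zero R] [One R] (c a : n → α) : Matrix n n R :=
  Matrix.of fun i j => if c j = a i then 1 else 0

theorem injective_and_mem_range_of_det_selectionMatrix_ne_zero [Fintype n] {c a : n → α}
    (h : (selectionMatrix R c a).det ≠ 0) : Injective a ∧ ∀ i, a i ∈ Set.range c := by
  refine ⟨fun i i' hii' => by_contra fun hne => h (Matrix.det_zero_of_row_eq hne ?_),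
    fun i => ?_⟩
  · ext j; simp [selectionMatrix, hii']
  · by_contra hi
    exact h (Matrix.det_eq_zero_of_row_eq_zero i fun j => if_neg fun hj => hi ⟨j, hj⟩)

theorem selectionMatrix_self {c : n → α} (hc : Injective c) : selectionMatrix R c c = 1 := by
  ext i j
  simp [selectionMatrix, Matrix.one_apply, hc.eq_iff, eq_comm]

end SelectionMatrix

def blockI (lam : ℕ → ℕ) (T : ℕ → ℕ → ℕ) (s b : ℕ) : Finset ℕ :=
  Ico (fcount lam T s (b - 1)) (fcount lam T s b)

def Sb (l : ℕ) (lam : ℕ → ℕ) (T : ℕ → ℕ → ℕ) (b : ℕ) : Finset ℕ :=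
  (range l).biUnion fun s => blockI lam T s b

theorem fcount_mono (lam : ℕ → ℕ) (T : ℕ → ℕ → ℕ) (s : ℕ) :
    Monotone (fcount lam T s) :=
  fun _ _ hbb' => sum_le_sum_of_subset (Icc_subset_Icc_right hbb')

theorem blockI_eq_Ico (lam : ℕ → ℕ) (T : ℕ → ℕ → ℕ) (s b : ℕ) :
    blockI lam T s b =
      Ico (fcount lam T s (b - 1)) (fcount lam T s (b - 1) + #(blockI lam T s b)) := by
  rw [blockI, Nat.card_Ico, Nat.add_sub_cancel' (fcount_mono lam T s (Nat.sub_le b 1))]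

section Permutations

variable {l : ℕ} {lam : ℕ → ℕ}

theorem gIdx_of_lt (γ : ∀ s : Fin l, Equiv.Perm (Fin (lam s))) {s j : ℕ} (hs : s < l)
    (hj : j < lam s) : gIdx l lam γ s j = γ ⟨s, hs⟩ ⟨j, hj⟩ := by
  rw [gIdx, dif_pos hs, dif_pos hj]

theorem gIdx_injOn (γ : ∀ s : Fin l, Equiv.Perm (Fin (lam s))) {s : ℕ} (hs : s < l) :
    Set.InjOn (gIdx l lam γ s) (Set.Iio (lam s)) := fun j hj j' hj' h => by
  rw [gIdx_of_lt γ hs hj, gIdx_of_lt γ hs hj', Fin.val_inj, (γ _).apply_eq_iff_eq] at h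
  exact congrArg Fin.val h

theorem gIdx_one {s j : ℕ} (hs : s < l) (hj : j < lam s) : gIdx l lam 1 s j = j := by
  rw [gIdx_of_lt 1 hs hj]
  rfl

open Equiv in
theorem uncurry_gIdx_update_swap (γ : ∀ s : Fin l, Perm (Fin (lam s))) (s₀ : Fin l)
    (x y : Fin (lam s₀)) :
    uncurry (gIdx l lam (update γ s₀ (γ s₀ * swap x y)))
      = uncurry (gIdx l lam γ) ∘ swap ((s₀ : ℕ), (x : ℕ)) ((s₀ : ℕ), (y : ℕ)) := by
  funext ⟨s, j⟩
  obtain ⟨s₀, hs₀⟩ := s₀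
  simp only [uncurry_apply_pair, comp_apply]
  by_cases hs : s = s₀
  · subst hs
    by_cases hj : j < lam s
    · have hinj : Injective fun z : Fin (lam s) => (s, (z : ℕ)) := fun z z' h => by
        simpa [Fin.val_inj] using h
      rw [show (s, j) = (s, ((⟨j, hj⟩ : Fin (lam s)) : ℕ)) from rfl, hinj.swap_apply,
        uncurry_apply_pair, gIdx_of_lt _ hs₀ hj, gIdx_of_lt _ hs₀ (Fin.isLt _), update_self,
        Perm.mul_apply]
    · have hne : ∀ z : Fin (lam s), (s, j) ≠ (s, (z : ℕ)) := fun z h => by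
        simp only [Prod.mk.injEq, true_and] at h
        exact hj (h ▸ z.isLt)
      rw [swap_apply_of_ne_of_ne (hne x) (hne y), uncurry_apply_pair]
      simp only [gIdx, dif_neg hj, dite_eq_ite, ite_self]
  · have hne : ∀ z : ℕ, (s, j) ≠ (s₀, z) := fun z h => hs (Prod.mk.inj h).1
    rw [swap_apply_of_ne_of_ne (hne x) (hne y), uncurry_apply_pair]
    unfold gIdx
    split_ifs
    · rw [update_of_ne fun h => hs (congrArg Fin.val h)]
    all_goals rfl

end Permutations

def blockImage (l : ℕ) (lam : ℕ → ℕ) (γ : ∀ s : Fin l, Equiv.Perm (Fin (lam s)))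
    (T : ℕ → ℕ → ℕ) (s b : ℕ) : Finset ℕ :=
  (blockI lam T s b).image (gIdx l lam γ s)

def rowKey (l : ℕ) (lam : ℕ → ℕ) (T : ℕ → ℕ → ℕ) : Lex (ℕ → ℕ) :=
  toLex fun b => ∑ x ∈ Sb l lam T b, x

def boxList (l : ℕ) (lam : ℕ → ℕ) (T : ℕ → ℕ → ℕ) (b : ℕ) : List (ℕ × ℕ) :=
  (List.range l).flatMap fun s =>
    (List.range' (fcount lam T s (b - 1)) (hcount lam T s b)).map (s, ·)

def rowIdx (k l : ℕ) (lam : ℕ → ℕ) (T : ℕ → ℕ → ℕ)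
    (γ : ∀ s : Fin l, Equiv.Perm (Fin (lam s))) (b : ℕ) : Fin k → ℕ :=
  fun i => uncurry (gIdx l lam γ) ((boxList l lam T b).getD i (0, 0))

theorem factorList_eq_map (N l : ℕ) (lam : ℕ → ℕ) (T : ℕ → ℕ → ℕ)
    (γ : ∀ s : Fin l, Equiv.Perm (Fin (lam s))) (b : ℕ) :
    factorList N l lam T γ b = (boxList l lam T b).map (E N ∘ uncurry (gIdx l lam γ)) := by
  simp only [factorList, boxList, List.map_flatMap, List.map_map]
  rfl

theorem nodup_boxList (l : ℕ) (lam : ℕ → ℕ) (T : ℕ → ℕ → ℕ) (b : ℕ) :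
    (boxList l lam T b).Nodup := by
  refine List.nodup_flatMap.mpr ⟨fun s _ => (List.nodup_range').map fun j j' h => ?_,
    List.nodup_range.imp fun hss' p hp hp' => ?_⟩
  · exact (Prod.mk.inj h).2
  · obtain ⟨_, -, rfl⟩ := List.mem_map.mp hp
    obtain ⟨_, -, h⟩ := List.mem_map.mp hp'
    exact hss' (Prod.mk.inj h).1.symm

def coordL (N m : ℕ) : (Fin N → ℂ) →ₗ[ℂ] ℂ :=
  if h : m < N then LinearMap.proj ⟨m, h⟩ else 0

theorem coordL_E {N m : ℕ} (hm : m < N) (m' : ℕ) :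
    coordL N m (E N m') = if m = m' then 1 else 0 := by
  rw [coordL, dif_pos hm]
  rfl

def wedgeDet (k N : ℕ) (c : Fin k → ℕ) : ⋀[ℂ]^k (Fin N → ℂ) →ₗ[ℂ] ℂ :=
  exteriorPower.alternatingMapLinearEquiv
    (Matrix.detRowAlternating.compLinearMap (LinearMap.pi fun j => coordL N (c j)))

theorem wedgeDet_ιMulti {k N : ℕ} {c : Fin k → ℕ} (hc : ∀ j, c j < N) (a : Fin k → ℕ) :
    wedgeDet k N c (exteriorPower.ιMulti ℂ k (E N ∘ a)) = (selectionMatrix ℂ c a).det := by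
  rw [wedgeDet, exteriorPower.alternatingMapLinearEquiv_apply_ιMulti,
    AlternatingMap.compLinearMap_apply]
  change Matrix.det _ = _
  congr 1
  ext i j
  simp [selectionMatrix, coordL_E (hc j)]

def tensorDet (k d N : ℕ) (c : Fin d → Fin k → ℕ) :
    (⨂[ℂ]^d (⋀[ℂ]^k (Fin N → ℂ))) →ₗ[ℂ] ℂ :=
  PiTensorProduct.lift
    ((MultilinearMap.mkPiAlgebra ℂ (Fin d) ℂ).compLinearMap fun g => wedgeDet k N (c g))

theorem tensorDet_tprod {k d N : ℕ} (c : Fin d → Fin k → ℕ)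
    (v : Fin d → ⋀[ℂ]^k (Fin N → ℂ)) :
    tensorDet k d N c (PiTensorProduct.tprod ℂ v) = ∏ g, wedgeDet k N (c g) (v g) := by
  rw [tensorDet, PiTensorProduct.lift.tprod, MultilinearMap.compLinearMap_apply,
    MultilinearMap.mkPiAlgebra_apply]

def dualFun (k d N l : ℕ) (lam : ℕ → ℕ) (T₀ : ℕ → ℕ → ℕ) :
    (⨂[ℂ]^d (⋀[ℂ]^k (Fin N → ℂ))) →ₗ[ℂ] ℂ :=
  tensorDet k d N fun g => rowIdx k l lam T₀ 1 (g + 1)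

theorem map_wT {k d N l : ℕ} {lam : ℕ → ℕ} {T : ℕ → ℕ → ℕ}
    (f : (⨂[ℂ]^d (⋀[ℂ]^k (Fin N → ℂ))) →ₗ[ℂ] ℂ) :
    f (wT k d N l lam T) =
      (((∏ s ∈ range l, ∏ b ∈ Icc 1 d, Nat.factorial (hcount lam T s b) : ℕ) : ℂ))⁻¹ *
        ∑ γ : ∀ s : Fin l, Equiv.Perm (Fin (lam s)),
          ((∏ s : Fin l, (Equiv.Perm.sign (γ s) : ℤ) : ℤ) : ℂ) *
            f (tTensor k d N l lam T γ) := by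
  simp only [wT, map_smul, map_sum, smul_eq_mul]

namespace IsTab

variable {k d l N : ℕ} {lam : ℕ → ℕ} {T T₀ : ℕ → ℕ → ℕ}
  {γ : ∀ s : Fin l, Equiv.Perm (Fin (lam s))}

theorem fcount_eq_card (ht : IsTab k d l lam T) (s b : ℕ) :
    fcount lam T s b = #{i ∈ range (lam s) | T s i ≤ b} := by
  rw [card_eq_sum_card_fiberwise (f := T s) (t := Icc 1 b) fun i hi => by
    rw [mem_coe, mem_filter, mem_range] at hi
    exact mem_Icc.mpr ⟨(ht.1 s i hi.1).1, hi.2⟩]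
  refine sum_congr rfl fun b' hb' => ?_
  rw [filter_filter, hcount]
  congr 1
  refine filter_congr fun i _ => ?_
  have := mem_Icc.mp hb'
  omega

theorem lt_fcount_iff (ht : IsTab k d l lam T) {s b i : ℕ} :
    i < fcount lam T s b ↔ i < lam s ∧ T s i ≤ b := by
  rw [ht.fcount_eq_card, ← mem_range, ← filter_range_eq_range_card, mem_filter, mem_range]
  exact fun i j hij hj hb => (ht.2.2.1 s i j hij hj).trans hb

theorem mem_blockI (ht : IsTab k d l lam T) {s b j : ℕ} :
    j ∈ blockI lam T s b ↔ j < lam s ∧ T s j = b := by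
  rw [blockI, mem_Ico, ht.lt_fcount_iff, ← not_lt, ht.lt_fcount_iff]
  constructor
  · rintro ⟨h₁, h₂, h₃⟩
    have := (ht.1 s j h₂).1
    exact ⟨h₂, by omega⟩
  · rintro ⟨h₁, rfl⟩
    have := (ht.1 s j h₁).1
    exact ⟨by omega, h₁, le_rfl⟩

theorem card_blockI (ht : IsTab k d l lam T) (s b : ℕ) :
    #(blockI lam T s b) = hcount lam T s b := by
  rw [hcount]
  congr 1
  ext j
  rw [ht.mem_blockI, mem_filter, mem_range]

theorem pairwiseDisjoint_blockI (ht : IsTab k d l lam T) (S : Set ℕ) (b : ℕ) :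
    S.PairwiseDisjoint (blockI lam T · b) := by
  intro s _ s' _ hss'
  rw [onFun, disjoint_left]
  intro j hj hj'
  rw [ht.mem_blockI] at hj hj'
  rcases hss'.lt_or_gt with h | h
  · exact (ht.2.2.2.1 s s' j h hj'.1).ne (hj.2.trans hj'.2.symm)
  · exact (ht.2.2.2.1 s' s j h hj.1).ne (hj'.2.trans hj.2.symm)

theorem mem_Sb (ht : IsTab k d l lam T) {b i : ℕ} :
    i ∈ Sb l lam T b ↔ ∃ s < l, i < lam s ∧ T s i = b := by
  simp only [Sb, mem_biUnion, mem_range, ht.mem_blockI]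

theorem lt_of_mem_Sb (ht : IsTab k d l lam T) (hanti : Antitone lam) {b i : ℕ}
    (hi : i ∈ Sb l lam T b) : i < lam 0 := by
  obtain ⟨s, -, hi, -⟩ := ht.mem_Sb.mp hi
  exact hi.trans_le (hanti (Nat.zero_le s))

theorem Sb_zero (ht : IsTab k d l lam T) : Sb l lam T 0 = ∅ := by
  ext i
  simp only [ht.mem_Sb, notMem_empty, iff_false, not_exists, not_and]
  intro s _ hi h
  exact absurd (ht.1 s i hi).1 (by omega)

-- A row of a tableau is strictly increasing, so it is determined by its set of entries.
theorem le_of_Sb_eq (ht : IsTab k d l lam T) (ht₀ : IsTab k d l lam T₀)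
    (hzero : ∀ s, l ≤ s → lam s = 0)
    (hS : ∀ b, 1 ≤ b → b ≤ d → Sb l lam T b = Sb l lam T₀ b) {s i : ℕ} (hi : i < lam s)
    (hprev : ∀ s' < s, T s' i = T₀ s' i) : T₀ s i ≤ T s i := by
  have hs : s < l := by
    by_contra h
    rw [hzero s (by omega)] at hi
    exact absurd hi (Nat.not_lt_zero i)
  obtain ⟨hb₁, hbd⟩ := ht.1 s i hi
  obtain ⟨s', -, hi', hT⟩ :=
    ht₀.mem_Sb.mp (hS _ hb₁ hbd ▸ ht.mem_Sb.mpr ⟨s, hs, hi, rfl⟩)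
  rcases lt_trichotomy s' s with hlt | rfl | hlt
  · exact absurd (hprev s' hlt ▸ hT) (ht.2.2.2.1 s' s i hlt hi).ne
  · exact hT.le
  · exact hT ▸ (ht₀.2.2.2.1 s s' i hlt hi').le

theorem eq_of_Sb_eq (ht : IsTab k d l lam T) (ht₀ : IsTab k d l lam T₀)
    (hzero : ∀ s, l ≤ s → lam s = 0)
    (hS : ∀ b, 1 ≤ b → b ≤ d → Sb l lam T b = Sb l lam T₀ b) : T = T₀ := by
  funext s i
  induction s using Nat.strong_induction_on with
  | _ s ih =>
  by_cases hi : i < lam s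
  · exact le_antisymm
      (le_of_Sb_eq ht₀ ht hzero (fun b hb₁ hbd => (hS b hb₁ hbd).symm) hi fun s' hs' =>
        (ih s' hs').symm)
      (le_of_Sb_eq ht ht₀ hzero hS hi ih)
  · rw [ht.2.1 s i (by omega), ht₀.2.1 s i (by omega)]

theorem blockI_subset_Iio (ht : IsTab k d l lam T) (s b : ℕ) :
    (blockI lam T s b : Set ℕ) ⊆ Set.Iio (lam s) := fun _ hj => (ht.mem_blockI.mp hj).1

theorem blockImage_one (ht : IsTab k d l lam T) {s : ℕ} (hs : s < l) (b : ℕ) :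
    blockImage l lam 1 T s b = blockI lam T s b := by
  exact (image_congr fun j hj => gIdx_one hs (ht.blockI_subset_Iio s b hj)).trans image_id'

theorem card_blockImage (ht : IsTab k d l lam T) {s : ℕ} (hs : s < l) (b : ℕ) :
    #(blockImage l lam γ T s b) = #(blockI lam T s b) :=
  card_image_of_injOn ((gIdx_injOn γ hs).mono (ht.blockI_subset_Iio s b))

theorem fcount_le_of_mem_blockImage (ht : IsTab k d l lam T) {s b x : ℕ} (hs : s < l)
    (hprev : ∀ b' < b, blockImage l lam γ T s b' = blockI lam T s b')
    (hx : x ∈ blockImage l lam γ T s b) : fcount lam T s (b - 1) ≤ x := by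
  obtain ⟨j, hj, rfl⟩ := mem_image.mp hx
  obtain ⟨hjs, hTj⟩ := ht.mem_blockI.mp hj
  by_contra hlt
  obtain ⟨hxs, hxb⟩ := ht.lt_fcount_iff.mp (not_le.mp hlt)
  have hx₁ := (ht.1 s _ hxs).1
  have hj₁ := (ht.1 s j hjs).1
  have hmem : gIdx l lam γ s j ∈ blockImage l lam γ T s (T s (gIdx l lam γ s j)) := by
    rw [hprev _ (by omega)]
    exact ht.mem_blockI.mpr ⟨hxs, rfl⟩
  obtain ⟨j', hj', hjj'⟩ := mem_image.mp hmem
  obtain ⟨hj's, hTj'⟩ := ht.mem_blockI.mp hj'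
  rw [gIdx_injOn γ hs hj's hjs hjj'] at hTj'
  omega

theorem sum_blockI_le_sum_blockImage_and_eq (ht : IsTab k d l lam T) {s b : ℕ} (hs : s < l)
    (hprev : ∀ b' < b, blockImage l lam γ T s b' = blockI lam T s b') :
    ∑ x ∈ blockI lam T s b, x ≤ ∑ x ∈ blockImage l lam γ T s b, x ∧
      (∑ x ∈ blockImage l lam γ T s b, x ≤ ∑ x ∈ blockI lam T s b, x →
        blockImage l lam γ T s b = blockI lam T s b) := by
  have h := sum_Ico_le_sum_and_eq fun x hx => ht.fcount_le_of_mem_blockImage hs hprev hx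
  rwa [ht.card_blockImage hs, ← blockI_eq_Ico] at h

theorem Sb_eq_of_blockImage_eq {b : ℕ}
    (hunion : (range l).biUnion (blockImage l lam γ T · b) = Sb l lam T₀ b)
    (h : ∀ s < l, blockImage l lam γ T s b = blockI lam T s b) :
    Sb l lam T b = Sb l lam T₀ b := by
  rw [← hunion, Sb]
  exact biUnion_congr rfl fun s hs => (h s (mem_range.mp hs)).symm

theorem sum_Sb_le_and_eq (ht : IsTab k d l lam T) {b : ℕ}
    (hprev : ∀ b' < b, ∀ s < l, blockImage l lam γ T s b' = blockI lam T s b')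
    (hdisj : ((range l : Finset ℕ) : Set ℕ).PairwiseDisjoint (blockImage l lam γ T · b))
    (hunion : (range l).biUnion (blockImage l lam γ T · b) = Sb l lam T₀ b) :
    ∑ x ∈ Sb l lam T b, x ≤ ∑ x ∈ Sb l lam T₀ b, x ∧
      (∑ x ∈ Sb l lam T₀ b, x ≤ ∑ x ∈ Sb l lam T b, x →
        ∀ s < l, blockImage l lam γ T s b = blockI lam T s b) := by
  have hcol : ∀ s ∈ range l, _ := fun s hs =>
    ht.sum_blockI_le_sum_blockImage_and_eq (γ := γ) (b := b) (mem_range.mp hs)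
      fun b' hb' => hprev b' hb' s (mem_range.mp hs)
  rw [Sb, sum_biUnion (ht.pairwiseDisjoint_blockI _ b), ← hunion, sum_biUnion hdisj]
  refine ⟨sum_le_sum fun s hs => (hcol s hs).1,
    fun hge s hs => (hcol s (mem_range.mpr hs)).2 ?_⟩
  have heq := (sum_eq_sum_iff_of_le fun s hs => (hcol s hs).1).mp
    (le_antisymm (sum_le_sum fun s hs => (hcol s hs).1) hge)
  exact (heq s (mem_range.mpr hs)).ge

theorem blockImage_eq_or_rowKey_lt (ht : IsTab k d l lam T) (ht₀ : IsTab k d l lam T₀)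
    (hpart : ∀ b, 1 ≤ b → b ≤ d →
      ((range l : Finset ℕ) : Set ℕ).PairwiseDisjoint (blockImage l lam γ T · b) ∧
        (range l).biUnion (blockImage l lam γ T · b) = Sb l lam T₀ b) :
    (∀ b, ∀ s < l, blockImage l lam γ T s b = blockI lam T s b) ∨
      rowKey l lam T < rowKey l lam T₀ := by
  classical
  by_cases hall : ∀ b, ∀ s < l, blockImage l lam γ T s b = blockI lam T s b
  · exact Or.inl hall
  push Not at hall
  right
  have hmin : ∀ b < Nat.find hall, ∀ s < l, blockImage l lam γ T s b = blockI lam T s b :=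
    fun b hb => by simpa using Nat.find_min hall hb
  obtain ⟨s₀, hs₀, hne⟩ := Nat.find_spec hall
  have hb₀ : 1 ≤ Nat.find hall ∧ Nat.find hall ≤ d := by
    by_contra hout
    have hempty : blockI lam T s₀ (Nat.find hall) = ∅ :=
      eq_empty_of_forall_notMem fun j hj => by
      obtain ⟨hj, hTj⟩ := ht.mem_blockI.mp hj
      have := ht.1 s₀ j hj
      omega
    exact hne (by rw [blockImage, hempty, image_empty])
  obtain ⟨hdisj, hunion⟩ := hpart _ hb₀.1 hb₀.2
  obtain ⟨hle, hge⟩ := ht.sum_Sb_le_and_eq hmin hdisj hunion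
  refine ⟨Nat.find hall, fun b hb => ?_, lt_of_le_of_ne hle fun h => hne (hge h.ge s₀ hs₀)⟩
  change ∑ x ∈ Sb l lam T b, x = ∑ x ∈ Sb l lam T₀ b, x
  rcases Nat.eq_zero_or_pos b with rfl | hb₁
  · rw [ht.Sb_zero, ht₀.Sb_zero]
  · rw [Sb_eq_of_blockImage_eq (hpart b hb₁ (by omega)).2 (hmin b hb)]

theorem apply_eq_of_blockImage_eq (ht : IsTab k d l lam T)
    (h : ∀ b, ∀ s < l, blockImage l lam γ T s b = blockI lam T s b) (s : Fin l)
    (j : Fin (lam s)) :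
    T s (γ s j) = T s j := by
  have hmem : gIdx l lam γ s j ∈ blockImage l lam γ T s (T s j) :=
    mem_image_of_mem _ (ht.mem_blockI.mpr ⟨j.isLt, rfl⟩)
  rw [h _ s s.isLt, ht.mem_blockI, gIdx_of_lt γ s.isLt j.isLt] at hmem
  exact hmem.2

theorem mem_boxList (ht : IsTab k d l lam T) {b : ℕ} {p : ℕ × ℕ} :
    p ∈ boxList l lam T b ↔ p.1 < l ∧ p.2 ∈ blockI lam T p.1 b := by
  obtain ⟨s, j⟩ := p
  rw [blockI_eq_Ico, ht.card_blockI]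
  simp only [boxList, List.mem_flatMap, List.mem_range, List.mem_map, List.mem_range'_1,
    Prod.mk.injEq, mem_Ico]
  constructor
  · rintro ⟨s, hs, j, hj, rfl, rfl⟩
    exact ⟨hs, hj⟩
  · rintro ⟨hs, hj⟩
    exact ⟨s, hs, j, hj, rfl, rfl⟩

theorem length_boxList (ht : IsTab k d l lam T) {b : ℕ} (hb₁ : 1 ≤ b) (hbd : b ≤ d) :
    (boxList l lam T b).length = k := by
  rw [boxList, List.length_flatMap, ← ht.2.2.2.2 b hb₁ hbd, sum_eq_multiset_sum, range_val,
    Multiset.range, Multiset.map_coe, Multiset.sum_coe]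
  simp

theorem image_rowIdx (ht : IsTab k d l lam T) (γ : ∀ s : Fin l, Equiv.Perm (Fin (lam s)))
    {b : ℕ} (hb₁ : 1 ≤ b) (hbd : b ≤ d) :
    univ.image (rowIdx k l lam T γ b) = (range l).biUnion (blockImage l lam γ T · b) := by
  unfold rowIdx
  rw [List.image_getD_eq (ht.length_boxList hb₁ hbd)]
  ext v
  simp only [mem_image, List.mem_toFinset, ht.mem_boxList, mem_biUnion, mem_range, blockImage,
    Prod.exists, uncurry_apply_pair]
  constructor
  · rintro ⟨s, j, ⟨hs, hj⟩, rfl⟩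
    exact ⟨s, hs, j, hj, rfl⟩
  · rintro ⟨s, hs, j, hj, rfl⟩
    exact ⟨s, j, ⟨hs, hj⟩, rfl⟩

theorem image_rowIdx_one (ht : IsTab k d l lam T) {b : ℕ} (hb₁ : 1 ≤ b) (hbd : b ≤ d) :
    univ.image (rowIdx k l lam T 1 b) = Sb l lam T b := by
  rw [ht.image_rowIdx 1 hb₁ hbd, Sb]
  exact biUnion_congr rfl fun s hs => ht.blockImage_one (mem_range.mp hs) b

theorem injective_rowIdx_one (ht : IsTab k d l lam T) {b : ℕ} (hb₁ : 1 ≤ b) (hbd : b ≤ d) :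
    Injective (rowIdx k l lam T 1 b) := by
  refine (nodup_boxList l lam T b).injective_getD (ht.length_boxList hb₁ hbd) ?_
  rintro ⟨s, j⟩ hp ⟨s', j'⟩ hp' h
  obtain ⟨hs, hj⟩ : s < l ∧ j ∈ blockI lam T s b := ht.mem_boxList.mp hp
  obtain ⟨hs', hj'⟩ : s' < l ∧ j' ∈ blockI lam T s' b := ht.mem_boxList.mp hp'
  rw [uncurry_apply_pair, uncurry_apply_pair, gIdx_one hs (ht.mem_blockI.mp hj).1,
    gIdx_one hs' (ht.mem_blockI.mp hj').1] at h
  subst h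
  refine Prod.ext (by_contra fun hss' => ?_) rfl
  exact disjoint_left.mp (ht.pairwiseDisjoint_blockI Set.univ b trivial trivial hss') hj hj'

theorem pairwiseDisjoint_blockImage (ht : IsTab k d l lam T) {b : ℕ} (hb₁ : 1 ≤ b)
    (hbd : b ≤ d) (h : Injective (rowIdx k l lam T γ b)) :
    ((range l : Finset ℕ) : Set ℕ).PairwiseDisjoint (blockImage l lam γ T · b) := by
  have hinj : Set.InjOn (uncurry (gIdx l lam γ)) {p | p ∈ boxList l lam T b} :=
    List.injOn_of_injective_getD (ht.length_boxList hb₁ hbd) h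
  intro s hs s' hs' hss'
  rw [onFun, disjoint_left]
  rintro _ hx hx'
  obtain ⟨j, hj, rfl⟩ := mem_image.mp hx
  obtain ⟨j', hj', hjj'⟩ := mem_image.mp hx'
  have hp : (s, j) ∈ boxList l lam T b := ht.mem_boxList.mpr ⟨mem_range.mp hs, hj⟩
  have hp' : (s', j') ∈ boxList l lam T b := ht.mem_boxList.mpr ⟨mem_range.mp hs', hj'⟩
  exact hss' (Prod.mk.inj (hinj hp hp' hjj'.symm)).1

theorem tFactor_eq (ht : IsTab k d l lam T) (N : ℕ) (γ : ∀ s : Fin l, Equiv.Perm (Fin (lam s)))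
    {b : ℕ} (hb₁ : 1 ≤ b) (hbd : b ≤ d) :
    tFactor k N l lam T γ b = exteriorPower.ιMulti ℂ k (E N ∘ rowIdx k l lam T γ b) := by
  have hlen := ht.length_boxList hb₁ hbd
  refine Subtype.ext (show ExteriorAlgebra.ιMulti ℂ k _ = ExteriorAlgebra.ιMulti ℂ k _ from
    congrArg _ (funext fun i => ?_))
  rw [factorList_eq_map, comp_apply, rowIdx, List.getD_eq_getElem _ _ (by simp [hlen]),
    List.getD_eq_getElem _ _ (by simp [hlen]), List.getElem_map, comp_apply]

theorem getD_mem_boxList (ht : IsTab k d l lam T) {b : ℕ} (hb₁ : 1 ≤ b) (hbd : b ≤ d)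
    (n : Fin k) : (boxList l lam T b).getD n (0, 0) ∈ boxList l lam T b := by
  have hn : (n : ℕ) < (boxList l lam T b).length := by
    rw [ht.length_boxList hb₁ hbd]
    exact n.isLt
  rw [List.getD_eq_getElem _ _ hn]
  exact List.getElem_mem hn

open Equiv in
theorem rowIdx_update_swap_of_ne (ht : IsTab k d l lam T) {s₀ : Fin l} {x y : Fin (lam s₀)}
    (hT : T s₀ x = T s₀ y) {b : ℕ} (hb₁ : 1 ≤ b) (hbd : b ≤ d) (hb : b ≠ T s₀ x) :
    rowIdx k l lam T (update γ s₀ (γ s₀ * swap x y)) b = rowIdx k l lam T γ b := by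
  funext n
  have hval := (ht.mem_blockI.mp (ht.mem_boxList.mp (ht.getD_mem_boxList hb₁ hbd n)).2).2
  have hne : ∀ z : ℕ, T s₀ z = T s₀ x →
      (boxList l lam T b).getD n (0, 0) ≠ ((s₀ : ℕ), z) :=
    fun z hz h => hb (by rw [h] at hval; exact hval.symm.trans hz)
  rw [rowIdx, rowIdx, uncurry_gIdx_update_swap, comp_apply,
    swap_apply_of_ne_of_ne (hne x rfl) (hne y hT.symm)]

open Equiv in
theorem tFactor_update_swap (ht : IsTab k d l lam T) (N : ℕ)
    (γ : ∀ s : Fin l, Perm (Fin (lam s))) {s₀ : Fin l} {x y : Fin (lam s₀)} (hxy : x ≠ y)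
    (hT : T s₀ x = T s₀ y) :
    tFactor k N l lam T (update γ s₀ (γ s₀ * swap x y)) (T s₀ x)
      = -tFactor k N l lam T γ (T s₀ x) := by
  obtain ⟨hb₁, hbd⟩ := ht.1 s₀ x x.isLt
  have hp : ((s₀ : ℕ), (x : ℕ)) ∈ boxList l lam T (T s₀ x) :=
    ht.mem_boxList.mpr ⟨s₀.isLt, ht.mem_blockI.mpr ⟨x.isLt, rfl⟩⟩
  have hq : ((s₀ : ℕ), (y : ℕ)) ∈ boxList l lam T (T s₀ x) :=
    ht.mem_boxList.mpr ⟨s₀.isLt, ht.mem_blockI.mpr ⟨y.isLt, hT.symm⟩⟩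
  obtain ⟨i, j, hij, hswap⟩ := (nodup_boxList l lam T _).exists_swap_getD
    (ht.length_boxList hb₁ hbd) hp hq (by simpa [Fin.val_inj] using hxy) (0, 0)
  have hrow : E N ∘ rowIdx k l lam T (update γ s₀ (γ s₀ * swap x y)) (T s₀ x)
      = (E N ∘ rowIdx k l lam T γ (T s₀ x)) ∘ swap i j :=
    funext fun n => by simp only [comp_apply, rowIdx, uncurry_gIdx_update_swap, hswap]
  rw [ht.tFactor_eq N _ hb₁ hbd, ht.tFactor_eq N γ hb₁ hbd, hrow,
    AlternatingMap.map_swap _ _ hij]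

open Equiv in
theorem tTensor_update_swap (ht : IsTab k d l lam T) (N : ℕ)
    (γ : ∀ s : Fin l, Perm (Fin (lam s))) {s₀ : Fin l} {x y : Fin (lam s₀)} (hxy : x ≠ y)
    (hT : T s₀ x = T s₀ y) :
    tTensor k d N l lam T (update γ s₀ (γ s₀ * swap x y)) = -tTensor k d N l lam T γ := by
  obtain ⟨hb₁, hbd⟩ := ht.1 s₀ x x.isLt
  let g₀ : Fin d := ⟨T s₀ x - 1, by omega⟩
  have hfactors :
      (fun g : Fin d => tFactor k N l lam T (update γ s₀ (γ s₀ * swap x y)) (g + 1)) =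
        update (fun g : Fin d => tFactor k N l lam T γ (g + 1)) g₀
          (-tFactor k N l lam T γ (g₀ + 1)) := by
    funext g
    rcases eq_or_ne g g₀ with rfl | hg
    · rw [update_self, show (g₀ : ℕ) + 1 = T s₀ x by simp only [g₀]; omega,
        ht.tFactor_update_swap N γ hxy hT]
    · have hg₁ : 1 ≤ (g : ℕ) + 1 := by omega
      have hgd : (g : ℕ) + 1 ≤ d := g.isLt
      rw [update_of_ne hg, ht.tFactor_eq N _ hg₁ hgd, ht.tFactor_eq N γ hg₁ hgd,
        ht.rowIdx_update_swap_of_ne hT hg₁ hgd fun h => hg (Fin.ext (by simp only [g₀]; omega))]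
  rw [tTensor, tTensor, hfactors, (PiTensorProduct.tprod ℂ).map_update_neg, update_eq_self]

theorem dualFun_tTensor (ht : IsTab k d l lam T) (ht₀ : IsTab k d l lam T₀)
    (hanti : Antitone lam) (hN : lam 0 ≤ N) (γ : ∀ s : Fin l, Equiv.Perm (Fin (lam s))) :
    dualFun k d N l lam T₀ (tTensor k d N l lam T γ) = ∏ g : Fin d,
      (selectionMatrix ℂ (rowIdx k l lam T₀ 1 (g + 1)) (rowIdx k l lam T γ (g + 1))).det := by
  rw [dualFun, tTensor, tensorDet_tprod]
  refine prod_congr rfl fun g _ => ?_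
  have hg₁ : 1 ≤ (g : ℕ) + 1 := by omega
  have hgd : (g : ℕ) + 1 ≤ d := g.isLt
  refine (ht.tFactor_eq N γ hg₁ hgd).symm ▸ wedgeDet_ιMulti (fun j => ?_) _
  have hj := ht₀.image_rowIdx_one hg₁ hgd ▸
    mem_image_of_mem (rowIdx k l lam T₀ 1 (g + 1)) (mem_univ j)
  exact (ht₀.lt_of_mem_Sb hanti hj).trans_le hN

theorem blockImage_partition_of_det_ne_zero (ht : IsTab k d l lam T) (ht₀ : IsTab k d l lam T₀)
    {b : ℕ} (hb₁ : 1 ≤ b) (hbd : b ≤ d)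
    (hdet : (selectionMatrix ℂ (rowIdx k l lam T₀ 1 b) (rowIdx k l lam T γ b)).det ≠ 0) :
    ((range l : Finset ℕ) : Set ℕ).PairwiseDisjoint (blockImage l lam γ T · b) ∧
      (range l).biUnion (blockImage l lam γ T · b) = Sb l lam T₀ b := by
  obtain ⟨hinj, hmem⟩ := injective_and_mem_range_of_det_selectionMatrix_ne_zero hdet
  have himage : univ.image (rowIdx k l lam T γ b) = univ.image (rowIdx k l lam T₀ 1 b) := by
    refine eq_of_subset_of_card_le (fun v hv => ?_) ?_
    · obtain ⟨i, -, rfl⟩ := mem_image.mp hv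
      obtain ⟨j, hj⟩ := hmem i
      exact hj ▸ mem_image_of_mem _ (mem_univ j)
    · rw [card_image_of_injective _ hinj]
      exact card_image_le
  exact ⟨ht.pairwiseDisjoint_blockImage hb₁ hbd hinj,
    by rw [← ht.image_rowIdx γ hb₁ hbd, himage, ht₀.image_rowIdx_one hb₁ hbd]⟩

theorem eq_or_rowKey_lt_of_dualFun_ne_zero (ht : IsTab k d l lam T) (ht₀ : IsTab k d l lam T₀)
    (hanti : Antitone lam) (hzero : ∀ s, l ≤ s → lam s = 0) (hN : lam 0 ≤ N)
    (h : dualFun k d N l lam T₀ (tTensor k d N l lam T γ) ≠ 0) :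
    (T = T₀ ∧ ∀ (s : Fin l) (j : Fin (lam s)), T s (γ s j) = T s j) ∨
      rowKey l lam T < rowKey l lam T₀ := by
  rw [ht.dualFun_tTensor ht₀ hanti hN] at h
  have hpart : ∀ b, 1 ≤ b → b ≤ d →
      ((range l : Finset ℕ) : Set ℕ).PairwiseDisjoint (blockImage l lam γ T · b) ∧
        (range l).biUnion (blockImage l lam γ T · b) = Sb l lam T₀ b := fun b hb₁ hbd => by
    have hdet := prod_ne_zero_iff.mp h ⟨b - 1, by omega⟩ (mem_univ _)
    rw [Fin.val_mk, Nat.sub_add_cancel hb₁] at hdet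
    exact ht.blockImage_partition_of_det_ne_zero ht₀ hb₁ hbd hdet
  refine (ht.blockImage_eq_or_rowKey_lt ht₀ hpart).imp_left fun hall => ⟨?_, ?_⟩
  · exact ht.eq_of_Sb_eq ht₀ hzero fun b hb₁ hbd =>
      Sb_eq_of_blockImage_eq (hpart b hb₁ hbd).2 (hall b)
  · exact fun s j => ht.apply_eq_of_blockImage_eq hall s j

theorem rowKey_lt_of_dualFun_wT_ne_zero (ht : IsTab k d l lam T) (ht₀ : IsTab k d l lam T₀)
    (hanti : Antitone lam) (hzero : ∀ s, l ≤ s → lam s = 0) (hN : lam 0 ≤ N) (hne : T ≠ T₀)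
    (h : dualFun k d N l lam T₀ (wT k d N l lam T) ≠ 0) :
    rowKey l lam T < rowKey l lam T₀ := by
  rw [map_wT] at h
  obtain ⟨γ, -, hγ⟩ := exists_ne_zero_of_sum_ne_zero (right_ne_zero_of_mul h)
  exact (ht.eq_or_rowKey_lt_of_dualFun_ne_zero ht₀ hanti hzero hN
    (right_ne_zero_of_mul hγ)).resolve_left fun h => hne h.1

theorem dualFun_wT_self_ne_zero (ht₀ : IsTab k d l lam T₀) (hanti : Antitone lam)
    (hzero : ∀ s, l ≤ s → lam s = 0) (hN : lam 0 ≤ N) :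
    dualFun k d N l lam T₀ (wT k d N l lam T₀) ≠ 0 := by
  classical
  let G := fun γ => dualFun k d N l lam T₀ (tTensor k d N l lam T₀ γ)
  have hG₁ : G 1 = 1 := by
    refine (ht₀.dualFun_tTensor ht₀ hanti hN 1).trans (prod_eq_one fun g _ => ?_)
    rw [selectionMatrix_self (ht₀.injective_rowIdx_one (by omega) g.isLt), Matrix.det_one]
  have hterm : ∀ γ : ∀ s : Fin l, Equiv.Perm (Fin (lam s)),
      ((∏ s, (Equiv.Perm.sign (γ s) : ℤ) : ℤ) : ℂ) * G γ =
        if ∀ (s : Fin l) (j : Fin (lam s)), T₀ s (γ s j) = T₀ s j then 1 else 0 := by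
    intro γ
    split_ifs with hγ
    · refine hG₁ ▸ Equiv.Perm.sign_prod_mul_eq_of_swap
        (fun (s : Fin l) (j : Fin (lam s)) => T₀ s j) G (fun γ s x y hxy hT => ?_) γ hγ
      simp only [G]
      rw [ht₀.tTensor_update_swap N γ hxy hT, map_neg]
    · by_contra hne
      exact hγ ((ht₀.eq_or_rowKey_lt_of_dualFun_ne_zero ht₀ hanti hzero hN
        (right_ne_zero_of_mul hne)).resolve_right (lt_irrefl _)).2
  rw [map_wT, sum_congr rfl fun γ _ => hterm γ, sum_boole]
  have hfact : (∏ s ∈ range l, ∏ b ∈ Icc 1 d, Nat.factorial (hcount lam T₀ s b)) ≠ 0 :=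
    prod_ne_zero_iff.mpr fun s _ => prod_ne_zero_iff.mpr fun b _ => (Nat.factorial_pos _).ne'
  have hone : (1 : ∀ s : Fin l, Equiv.Perm (Fin (lam s))) ∈
      univ.filter fun γ => ∀ (s : Fin l) (j : Fin (lam s)), T₀ s (γ s j) = T₀ s j :=
    mem_filter.mpr ⟨mem_univ 1, fun s j => rfl⟩
  exact mul_ne_zero (inv_ne_zero (Nat.cast_ne_zero.mpr hfact))
    (Nat.cast_ne_zero.mpr (card_ne_zero.mpr ⟨1, hone⟩))

end IsTab

theorem stmt_4_general (k d N l : ℕ)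
    (lam : ℕ → ℕ) (hanti : Antitone lam)
    (hzero : ∀ s, l ≤ s → lam s = 0)
    (hN : lam 0 ≤ N) :
    LinearIndependent ℂ
      (fun T : {T : ℕ → ℕ → ℕ // IsTab k d l lam T} => wT k d N l lam T.1) := by
  refine linearIndependent_of_triangular (R := ℂ) (M := ⨂[ℂ]^d (⋀[ℂ]^k (Fin N → ℂ))) _
    (fun T : {T // IsTab k d l lam T} => rowKey l lam T.1)
    (fun T => dualFun k d N l lam T.1) (fun T => ?_) (fun T T' hne h => ?_)
  · exact T.2.dualFun_wT_self_ne_zero hanti hzero hN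
  · exact T'.2.rowKey_lt_of_dualFun_wT_ne_zero T.2 hanti hzero hN
      (fun h' => hne (Subtype.ext h')) h

/-- Section 2.1: the family of vectors `w_T ∈ (⋀^k ℂ^N)^{⊗d}`, indexed by the set `𝒯` of
fillings of the diagram of `λ*` of weight `(k^d)` (rows strictly increasing, columns weakly
increasing), is linearly independent; here `λ` is the partition of `d*k` encoded by the
antitone function `lam`, with exactly `l` nonzero parts. -/
theorem stmt_4 (k d N l : ℕ) (hk : 0 < k) (hd : 0 < d)
    (lam : ℕ → ℕ) (hanti : Antitone lam)
    (hzero : ∀ s, l ≤ s → lam s = 0) (hpos : ∀ s, s < l → 0 < lam s)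
    (hsum : ∑ s ∈ Finset.range l, lam s = d * k)
    (hN : lam 0 ≤ N) :
    LinearIndependent ℂ
      (fun T : {T : ℕ → ℕ → ℕ // IsTab k d l lam T} => wT k d N l lam T.1) :=
  stmt_4_general k d N l lam hanti hzero hN
end
end

section
/- Let λ = (λ_1 ≥ … ≥ λ_l > 0) be a partition and d ≥ 2 an integer. For any two integers k, k' with k ≥ λ_1, k' ≥ λ_1, kd − |λ| ≥ λ_1 and k'd − |λ| ≥ λ_1, the number of semistandard Young tableaux of shape (kd − |λ|, λ_1, …, λ_l) in which each value i ∈ {1,…,d} occurs exactly k times equals the number of semistandard Young tableaux of shape (k'd − |λ|, λ_1, …, λ_l) in which each value i ∈ {1,…,d} occurs exactly k' times. (The multiplicity s_{k,d}(λ) is constant for k ≥ λ_1.) -/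
/-! A tableau of shape `(kd − |λ|, λ)` with content `(k, …, k)` is determined by its lower
rows `L`: its first row must contain `k − mᵢ` copies of `i`, where `mᵢ` counts the `i`s in `L`,
and a weakly increasing row is determined by its content. The `L` that occur are exactly the
semistandard fillings of `λ` by entries `≤ d` whose `r`-th row (from `0`) has entries `≥ r + 2`,
a condition not involving `k`: each value occurs in `L` at most once per column, so `mᵢ ≤ λ₁ ≤ k`,
and since `1` does not occur in `L` the first row begins with `k ≥ λ₁` ones, so it never breaks
column strictness. -/

/-- A semistandard Young tableau of shape `μ` (the shape is given by the row-length
function `μ : ℕ → ℕ`, rows and columns being 0-indexed): entries are positive integers,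
vanish outside the diagram (a normalization), are weakly increasing along each row and
strictly increasing down each column. -/
def IsSSYT (μ : ℕ → ℕ) (T : ℕ → ℕ → ℕ) : Prop :=
  (∀ r c, c < μ r → 1 ≤ T r c) ∧
  (∀ r c, μ r ≤ c → T r c = 0) ∧
  (∀ r c c', c ≤ c' → c' < μ r → T r c ≤ T r c') ∧
  (∀ r r' c, r < r' → c < μ r' → T r c < T r' c)

/-- The shape `(kd − |λ|, λ_1, …, λ_l)` obtained from the partition `λ` (encoded by the
row-length function `lam`) by adding a first row of length `kd − |λ|`. -/
def shape (k d l : ℕ) (lam : ℕ → ℕ) : ℕ → ℕ :=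
  fun r => if r = 0 then k * d - ∑ i ∈ Finset.range l, lam i else lam (r - 1)

open Finset

def entryCount (μ : ℕ → ℕ) (R : ℕ) (T : ℕ → ℕ → ℕ) (i : ℕ) : ℕ :=
  ∑ r ∈ range R, #{c ∈ range (μ r) | T r c = i}

def lowerRows (T : ℕ → ℕ → ℕ) : ℕ → ℕ → ℕ := fun r c => T (r + 1) c

theorem lt_card_filter_le_iff {g : ℕ → ℕ} {n c : ℕ} (hg : MonotoneOn g (Set.Iio n))
    (hc : c < n) (v : ℕ) : c < #{x ∈ range n | g x ≤ v} ↔ g c ≤ v := by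
  constructor
  · intro h
    by_contra! hv
    have hsub : {x ∈ range n | g x ≤ v} ⊆ range c := by
      intro x hx
      simp only [mem_filter, mem_range] at hx ⊢
      by_contra! hcx
      have := hg hc hx.1 hcx
      omega
    simpa using h.trans_le (card_le_card hsub)
  · intro h
    have hsub : range (c + 1) ⊆ {x ∈ range n | g x ≤ v} := by
      intro x hx
      simp only [mem_filter, mem_range] at hx ⊢
      exact ⟨by omega, (hg (show x < n by omega) hc (by omega)).trans h⟩
    simpa using card_le_card hsub

theorem Monotone.sInf_setOf_lt_le_iff {f : ℕ → ℕ} (hf : Monotone f) {c n : ℕ} (hn : c < f n)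
    (v : ℕ) : sInf {v | c < f v} ≤ v ↔ c < f v :=
  ⟨fun h => (Nat.sInf_mem (s := {v | c < f v}) ⟨n, hn⟩).trans_le (hf h), fun h => Nat.sInf_le h⟩

theorem Monotone.card_filter_sInf_setOf_lt_eq {f : ℕ → ℕ} (hf : Monotone f) {i n : ℕ}
    (hi : 1 ≤ i) (hin : i ≤ n) :
    #{c ∈ range (f n) | sInf {v | c < f v} = i} = f i - f (i - 1) := by
  have key : ∀ c, c < f n → (sInf {v | c < f v} = i ↔ f (i - 1) ≤ c ∧ c < f i) := by
    intro c hc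
    rw [← not_lt, ← hf.sInf_setOf_lt_le_iff hc, ← hf.sInf_setOf_lt_le_iff hc]
    omega
  rw [← Nat.card_Ico]
  congr 1
  ext c
  simp only [mem_filter, mem_range, mem_Ico]
  exact ⟨fun ⟨hc, h⟩ => (key c hc).1 h,
    fun h => ⟨h.2.trans_le (hf hin), (key c (h.2.trans_le (hf hin))).2 h⟩⟩

theorem mem_of_entryCount_eq {μ : ℕ → ℕ} {T : ℕ → ℕ → ℕ} {R k : ℕ} {s : Finset ℕ}
    (hcount : ∀ i ∈ s, entryCount μ R T i = k) (hsize : ∑ r ∈ range R, μ r = #s * k)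
    {r c : ℕ} (hr : r < R) (hc : c < μ r) : T r c ∈ s := by
  have hsum : ∑ r ∈ range R, #{c ∈ range (μ r) | T r c ∈ s} = ∑ r ∈ range R, #(range (μ r)) := by
    simp_rw [← sum_card_fiberwise_eq_card_filter, card_range]
    rw [sum_comm, hsize]
    exact sum_const_nat hcount
  have hrow := (sum_eq_sum_iff_of_le fun r _ => card_filter_le _ _).mp hsum r (mem_range.mpr hr)
  exact card_filter_eq_iff.mp hrow c (mem_range.mpr hc)

namespace IsSSYT

variable {μ : ℕ → ℕ} {T : ℕ → ℕ → ℕ}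

theorem monotoneOn_row (hT : IsSSYT μ T) (r : ℕ) : MonotoneOn (T r) (Set.Iio (μ r)) :=
  fun _ _ _ hb hab => hT.2.2.1 r _ _ hab hb

theorem lowerRows (hT : IsSSYT μ T) : IsSSYT (fun r => μ (r + 1)) (lowerRows T) :=
  ⟨fun r => hT.1 (r + 1), fun r => hT.2.1 (r + 1), fun r => hT.2.2.1 (r + 1),
    fun r r' c h => hT.2.2.2 (r + 1) (r' + 1) c (by omega)⟩

theorem succ_le_apply (hμ : Antitone μ) (hT : IsSSYT μ T) {r c : ℕ} (hc : c < μ r) :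
    r + 1 ≤ T r c := by
  induction r with
  | zero => exact hT.1 0 c hc
  | succ r ih =>
    have := ih (hc.trans_le (hμ r.le_succ))
    have := hT.2.2.2 r (r + 1) c r.lt_succ_self hc
    omega

theorem entryCount_le (hμ : Antitone μ) (hT : IsSSYT μ T) (R i : ℕ) :
    entryCount μ R T i ≤ μ 0 := by
  rw [entryCount, ← card_biUnion]
  · refine (card_le_card fun c hc => ?_).trans_eq (card_range _)
    simp only [mem_biUnion, mem_filter, mem_range] at hc ⊢
    obtain ⟨r, -, hc, -⟩ := hc
    exact hc.trans_le (hμ (Nat.zero_le r))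
  · intro r _ r' _ hrr'
    rw [Function.onFun, disjoint_left]
    intro c hc hc'
    simp only [mem_filter, mem_range] at hc hc'
    rcases hrr'.lt_or_gt with h | h
    · exact (hT.2.2.2 r r' c h hc'.1).ne (hc.2.trans hc'.2.symm)
    · exact (hT.2.2.2 r' r c h hc.1).ne (hc'.2.trans hc.2.symm)

end IsSSYT

section FirstRow

variable {k d l : ℕ} {lam : ℕ → ℕ} {L T : ℕ → ℕ → ℕ}

theorem shape_zero : shape k d l lam 0 = k * d - ∑ i ∈ range l, lam i := rfl

@[simp]
theorem shape_succ (r : ℕ) : shape k d l lam (r + 1) = lam r := by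
  simp [shape]

theorem shape_antitone (hanti : Antitone lam) (hfirst : lam 0 + ∑ i ∈ range l, lam i ≤ k * d) :
    Antitone (shape k d l lam) := by
  intro a b hab
  rcases b with _ | b
  · rw [Nat.le_zero.mp hab]
  rcases a with _ | a
  · have := hanti (Nat.zero_le b)
    rw [shape_zero, shape_succ]
    omega
  · simpa using hanti (by omega : a ≤ b)

theorem sum_range_shape (hfirst : lam 0 + ∑ i ∈ range l, lam i ≤ k * d) :
    ∑ r ∈ range (l + 1), shape k d l lam r = k * d := by
  simp only [sum_range_succ', shape_succ, shape_zero]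
  omega

theorem entryCount_shape (T : ℕ → ℕ → ℕ) (i : ℕ) :
    entryCount (shape k d l lam) (l + 1) T i =
      #{c ∈ range (shape k d l lam 0) | T 0 c = i} + entryCount lam l (lowerRows T) i := by
  simp only [entryCount, sum_range_succ', shape_succ, add_comm]
  rfl

/-- Rows `1, …, l` of the tableaux being counted, shifted up by one; row `r` of `L` lies below
`r + 1` strictly smaller positive entries, whence `r + 2 ≤ L r c`. -/
def IsLowerPart (d : ℕ) (lam : ℕ → ℕ) (L : ℕ → ℕ → ℕ) : Prop :=
  IsSSYT lam L ∧ ∀ r c, c < lam r → r + 2 ≤ L r c ∧ L r c ≤ d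

/-- The number of entries `≤ v` that the first row on top of `L` must have for every value
to occur exactly `k` times. -/
def firstRowCumul (k l : ℕ) (lam : ℕ → ℕ) (L : ℕ → ℕ → ℕ) (v : ℕ) : ℕ :=
  ∑ i ∈ Icc 1 v, (k - entryCount lam l L i)

noncomputable def firstRow (k l : ℕ) (lam : ℕ → ℕ) (L : ℕ → ℕ → ℕ) (c : ℕ) : ℕ :=
  sInf {v | c < firstRowCumul k l lam L v}

noncomputable def attachFirstRow (k d l : ℕ) (lam : ℕ → ℕ) (L : ℕ → ℕ → ℕ) : ℕ → ℕ → ℕ :=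
  fun r c => if r = 0 then (if c < shape k d l lam 0 then firstRow k l lam L c else 0)
    else L (r - 1) c

theorem firstRowCumul_mono : Monotone (firstRowCumul k l lam L) :=
  fun _ _ h => sum_le_sum_of_subset (Icc_subset_Icc_right h)

theorem firstRowCumul_succ (v : ℕ) :
    firstRowCumul k l lam L (v + 1) =
      firstRowCumul k l lam L v + (k - entryCount lam l L (v + 1)) :=
  sum_Icc_succ_top (by omega) _

@[simp]
theorem attachFirstRow_succ (r c : ℕ) : attachFirstRow k d l lam L (r + 1) c = L r c := by
  simp [attachFirstRow]

theorem attachFirstRow_zero_of_lt {c : ℕ} (hc : c < shape k d l lam 0) :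
    attachFirstRow k d l lam L 0 c = firstRow k l lam L c := by
  simp [attachFirstRow, hc]

theorem attachFirstRow_zero_of_le {c : ℕ} (hc : shape k d l lam 0 ≤ c) :
    attachFirstRow k d l lam L 0 c = 0 := by
  simp [attachFirstRow, not_lt.mpr hc]

theorem lowerRows_attachFirstRow : lowerRows (attachFirstRow k d l lam L) = L := by
  funext r c
  simp [lowerRows]

namespace IsLowerPart

theorem entryCount_one (hL : IsLowerPart d lam L) : entryCount lam l L 1 = 0 := by
  refine sum_eq_zero fun r _ => card_eq_zero.mpr (filter_eq_empty_iff.mpr fun c hc => ?_)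
  have := (hL.2 r c (mem_range.mp hc)).1
  omega

theorem firstRowCumul_one (hL : IsLowerPart d lam L) : firstRowCumul k l lam L 1 = k := by
  simp [firstRowCumul, hL.entryCount_one]

theorem sum_entryCount (hL : IsLowerPart d lam L) :
    ∑ i ∈ Icc 1 d, entryCount lam l L i = ∑ r ∈ range l, lam r := by
  simp only [entryCount]
  rw [sum_comm]
  refine sum_congr rfl fun r _ => ?_
  rw [sum_card_fiberwise_eq_card_filter, filter_true_of_mem, card_range]
  intro c hc
  have := hL.2 r c (mem_range.mp hc)
  simp only [mem_Icc]
  omega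

theorem firstRowCumul_eq_shape (hanti : Antitone lam) (hk : lam 0 ≤ k)
    (hL : IsLowerPart d lam L) : firstRowCumul k l lam L d = shape k d l lam 0 := by
  have hle : ∀ i ∈ Icc 1 d, entryCount lam l L i ≤ k :=
    fun i _ => (hL.1.entryCount_le hanti l i).trans hk
  rw [firstRowCumul, sum_tsub_distrib _ hle, hL.sum_entryCount, sum_const, Nat.card_Icc,
    smul_eq_mul, Nat.add_sub_cancel, mul_comm, shape_zero]

theorem firstRow_le_iff (hanti : Antitone lam) (hk : lam 0 ≤ k) (hL : IsLowerPart d lam L)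
    {c : ℕ} (hc : c < shape k d l lam 0) (v : ℕ) :
    firstRow k l lam L c ≤ v ↔ c < firstRowCumul k l lam L v :=
  firstRowCumul_mono.sInf_setOf_lt_le_iff (n := d) (hL.firstRowCumul_eq_shape hanti hk ▸ hc) v

theorem isSSYT_attachFirstRow (hanti : Antitone lam) (hk : lam 0 ≤ k)
    (hfirst : lam 0 + ∑ i ∈ range l, lam i ≤ k * d) (hL : IsLowerPart d lam L) :
    IsSSYT (shape k d l lam) (attachFirstRow k d l lam L) := by
  have one_le_firstRow {c} (hc : c < shape k d l lam 0) : 1 ≤ firstRow k l lam L c := by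
    by_contra! h
    have := (hL.firstRow_le_iff hanti hk hc 0).mp (by omega)
    simp [firstRowCumul] at this
  have firstRow_le_one {c} (hc : c < shape k d l lam 0) (hck : c < lam 0) :
      firstRow k l lam L c ≤ 1 := by
    rw [hL.firstRow_le_iff hanti hk hc, hL.firstRowCumul_one]
    omega
  refine ⟨?_, ?_, ?_, ?_⟩
  · rintro (_ | r) c hc
    · rw [attachFirstRow_zero_of_lt hc]
      exact one_le_firstRow hc
    · have := (hL.2 r c (by simpa using hc)).1
      simp only [attachFirstRow_succ]
      omega
  · rintro (_ | r) c hc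
    · exact attachFirstRow_zero_of_le hc
    · simpa using hL.1.2.1 r c (by simpa using hc)
  · rintro (_ | r) c c' hcc hc'
    · rw [attachFirstRow_zero_of_lt hc', attachFirstRow_zero_of_lt (hcc.trans_lt hc'),
        hL.firstRow_le_iff hanti hk (hcc.trans_lt hc')]
      exact hcc.trans_lt ((hL.firstRow_le_iff hanti hk hc' _).mp le_rfl)
    · simpa using hL.1.2.2.1 r c c' hcc (by simpa using hc')
  · rintro (_ | r) (_ | r') c hrr hc
    · omega
    · simp only [shape_succ] at hc
      have hc0 : c < lam 0 := hc.trans_le (hanti (Nat.zero_le r'))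
      have hcs : c < shape k d l lam 0 := by rw [shape_zero]; omega
      have := (hL.2 r' c hc).1
      rw [attachFirstRow_zero_of_lt hcs, attachFirstRow_succ]
      have := firstRow_le_one hcs hc0
      omega
    · omega
    · simpa using hL.1.2.2.2 r r' c (by omega) (by simpa using hc)

theorem entryCount_attachFirstRow (hanti : Antitone lam) (hk : lam 0 ≤ k)
    (hL : IsLowerPart d lam L) {i : ℕ} (hi : 1 ≤ i) (hid : i ≤ d) :
    entryCount (shape k d l lam) (l + 1) (attachFirstRow k d l lam L) i = k := by
  have hrow : #{c ∈ range (shape k d l lam 0) | attachFirstRow k d l lam L 0 c = i} =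
      k - entryCount lam l L i := by
    rw [filter_congr fun c hc => by rw [attachFirstRow_zero_of_lt (mem_range.mp hc)],
      ← hL.firstRowCumul_eq_shape hanti hk]
    refine (firstRowCumul_mono.card_filter_sInf_setOf_lt_eq hi hid).trans ?_
    obtain ⟨j, rfl⟩ := Nat.exists_eq_add_of_le' hi
    rw [firstRowCumul_succ, Nat.add_sub_cancel]
    omega
  have hle := (hL.1.entryCount_le hanti l i).trans hk
  rw [entryCount_shape, lowerRows_attachFirstRow, hrow]
  omega

end IsLowerPart

theorem mem_Icc_of_entryCount_eq (hfirst : lam 0 + ∑ i ∈ range l, lam i ≤ k * d)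
    (hcount : ∀ i, 1 ≤ i → i ≤ d → entryCount (shape k d l lam) (l + 1) T i = k)
    {r c : ℕ} (hr : r < l + 1) (hc : c < shape k d l lam r) : T r c ∈ Icc 1 d :=
  mem_of_entryCount_eq (fun i hi => hcount i (mem_Icc.mp hi).1 (mem_Icc.mp hi).2)
    (by rw [sum_range_shape hfirst, Nat.card_Icc, Nat.add_sub_cancel, mul_comm]) hr hc

theorem isLowerPart_lowerRows (hanti : Antitone lam) (hzero : ∀ i, l ≤ i → lam i = 0)
    (hfirst : lam 0 + ∑ i ∈ range l, lam i ≤ k * d) (hT : IsSSYT (shape k d l lam) T)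
    (hcount : ∀ i, 1 ≤ i → i ≤ d → entryCount (shape k d l lam) (l + 1) T i = k) :
    IsLowerPart d lam (lowerRows T) := by
  have hshape : (fun r => shape k d l lam (r + 1)) = lam := funext shape_succ
  refine ⟨hshape ▸ hT.lowerRows, fun r c hc => ⟨?_, ?_⟩⟩
  · exact hT.succ_le_apply (shape_antitone hanti hfirst) (r := r + 1) (by simpa using hc)
  · have hr : r < l := by
      by_contra! h
      rw [hzero r h] at hc
      omega
    exact (mem_Icc.mp (mem_Icc_of_entryCount_eq hfirst hcount (by omega)
      (by simpa using hc))).2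

theorem firstRowCumul_lowerRows (hT : IsSSYT (shape k d l lam) T)
    (hcount : ∀ i, 1 ≤ i → i ≤ d → entryCount (shape k d l lam) (l + 1) T i = k)
    {v : ℕ} (hv : v ≤ d) :
    firstRowCumul k l lam (lowerRows T) v = #{c ∈ range (shape k d l lam 0) | T 0 c ≤ v} := by
  have hrow : ∀ i ∈ Icc 1 v,
      k - entryCount lam l (lowerRows T) i = #{c ∈ range (shape k d l lam 0) | T 0 c = i} := by
    intro i hi
    have := hcount i (mem_Icc.mp hi).1 ((mem_Icc.mp hi).2.trans hv)
    rw [entryCount_shape] at this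
    omega
  rw [firstRowCumul, sum_congr rfl hrow, sum_card_fiberwise_eq_card_filter]
  refine congrArg card (filter_congr fun c hc => ?_)
  have := hT.1 0 c (mem_range.mp hc)
  simp only [mem_Icc]
  omega

theorem attachFirstRow_lowerRows (hanti : Antitone lam) (hzero : ∀ i, l ≤ i → lam i = 0)
    (hk : lam 0 ≤ k) (hfirst : lam 0 + ∑ i ∈ range l, lam i ≤ k * d)
    (hT : IsSSYT (shape k d l lam) T)
    (hcount : ∀ i, 1 ≤ i → i ≤ d → entryCount (shape k d l lam) (l + 1) T i = k) :
    attachFirstRow k d l lam (lowerRows T) = T := by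
  have hL := isLowerPart_lowerRows hanti hzero hfirst hT hcount
  funext r c
  rcases r with _ | r
  · rcases lt_or_ge c (shape k d l lam 0) with hc | hc
    · rw [attachFirstRow_zero_of_lt hc]
      have key : ∀ v ≤ d, firstRow k l lam (lowerRows T) c ≤ v ↔ T 0 c ≤ v := fun v hv => by
        rw [hL.firstRow_le_iff hanti hk hc, firstRowCumul_lowerRows hT hcount hv,
          lt_card_filter_le_iff (hT.monotoneOn_row 0) hc]
      have hTd := (mem_Icc.mp (mem_Icc_of_entryCount_eq hfirst hcount (Nat.succ_pos l) hc)).2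
      have hFd : firstRow k l lam (lowerRows T) c ≤ d := by
        rwa [hL.firstRow_le_iff hanti hk hc, hL.firstRowCumul_eq_shape hanti hk]
      exact le_antisymm ((key _ hTd).2 le_rfl) ((key _ hFd).1 le_rfl)
    · rw [attachFirstRow_zero_of_le hc, hT.2.1 0 c hc]
  · rfl

noncomputable def lowerRowsEquiv (hanti : Antitone lam) (hzero : ∀ i, l ≤ i → lam i = 0)
    (hk : lam 0 ≤ k) (hfirst : lam 0 + ∑ i ∈ range l, lam i ≤ k * d) :
    {T // IsSSYT (shape k d l lam) T ∧
      ∀ i, 1 ≤ i → i ≤ d → entryCount (shape k d l lam) (l + 1) T i = k} ≃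
      {L // IsLowerPart d lam L} where
  toFun T := ⟨lowerRows T.1, isLowerPart_lowerRows hanti hzero hfirst T.2.1 T.2.2⟩
  invFun L := ⟨attachFirstRow k d l lam L.1, L.2.isSSYT_attachFirstRow hanti hk hfirst,
    fun _ hi hid => L.2.entryCount_attachFirstRow hanti hk hi hid⟩
  left_inv T := Subtype.ext (attachFirstRow_lowerRows hanti hzero hk hfirst T.2.1 T.2.2)
  right_inv _ := Subtype.ext (lowerRows_attachFirstRow (k := k) (d := d) (l := l) (lam := lam))

end FirstRow

theorem stmt_8_general (k k' d l : ℕ)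
    (lam : ℕ → ℕ) (hanti : Antitone lam)
    (hzero : ∀ i, l ≤ i → lam i = 0)
    (hk : lam 0 ≤ k) (hk' : lam 0 ≤ k')
    (hfirst : lam 0 + ∑ i ∈ Finset.range l, lam i ≤ k * d)
    (hfirst' : lam 0 + ∑ i ∈ Finset.range l, lam i ≤ k' * d) :
    Nat.card {T : ℕ → ℕ → ℕ // IsSSYT (shape k d l lam) T ∧
      ∀ i, 1 ≤ i → i ≤ d →
        (∑ r ∈ Finset.range (l + 1),
          ((Finset.range (shape k d l lam r)).filter fun c => T r c = i).card) = k} =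
    Nat.card {T : ℕ → ℕ → ℕ // IsSSYT (shape k' d l lam) T ∧
      ∀ i, 1 ≤ i → i ≤ d →
        (∑ r ∈ Finset.range (l + 1),
          ((Finset.range (shape k' d l lam r)).filter fun c => T r c = i).card) = k'} :=
  Nat.card_congr ((lowerRowsEquiv hanti hzero hk hfirst).trans
    (lowerRowsEquiv hanti hzero hk' hfirst').symm)

/-- Section 2.2, stability of the multiplicity `s_{k,d}(λ)`: for `d ≥ 2` and any `k, k'`
with `k, k' ≥ λ_1`, `kd − |λ| ≥ λ_1` and `k'd − |λ| ≥ λ_1`, the number of semistandard Young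
tableaux of shape `(kd − |λ|, λ_1, …, λ_l)` in which each value `i ∈ {1,…,d}` occurs exactly
`k` times equals the corresponding number for `k'`; here `λ` is the partition encoded by the
antitone function `lam`, with exactly `l` nonzero parts.  By Pieri's rule these numbers are
the multiplicities `s_{k,d}(λ)` of `S_{(kd−|λ|,λ)}V` inside `(S^k V)^{⊗d}`, so `s_{k,d}(λ)`
is constant for `k ≥ λ_1`. -/
theorem stmt_8 (k k' d l : ℕ) (hd : 2 ≤ d)
    (lam : ℕ → ℕ) (hanti : Antitone lam)
    (hzero : ∀ i, l ≤ i → lam i = 0) (hpos : ∀ i, i < l → 0 < lam i)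
    (hk : lam 0 ≤ k) (hk' : lam 0 ≤ k')
    (hfirst : lam 0 + ∑ i ∈ Finset.range l, lam i ≤ k * d)
    (hfirst' : lam 0 + ∑ i ∈ Finset.range l, lam i ≤ k' * d) :
    Nat.card {T : ℕ → ℕ → ℕ // IsSSYT (shape k d l lam) T ∧
      ∀ i, 1 ≤ i → i ≤ d →
        (∑ r ∈ Finset.range (l + 1),
          ((Finset.range (shape k d l lam r)).filter fun c => T r c = i).card) = k} =
    Nat.card {T : ℕ → ℕ → ℕ // IsSSYT (shape k' d l lam) T ∧
      ∀ i, 1 ≤ i → i ≤ d →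
        (∑ r ∈ Finset.range (l + 1),
          ((Finset.range (shape k' d l lam r)).filter fun c => T r c = i).card) = k'} :=
  stmt_8_general k k' d l lam hanti hzero hk hk' hfirst hfirst'
end
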